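/- arXiv:1204.4641 — 5 statements merged into one kernel-verified Lean document; each statement's English description precedes it below -/
import Mathlib

section
/- Let G be a group with a subset X and a normal abelian subgroup N such that G is generated by N together with X. Then the commutator subgroup [N,G] equals the product of the subgroups [N,x] over all x in X. -/
/-!
For a normal subgroup `N`, `⁅N, ·⁆` turns joins into joins. The join `S` of the `⁅N, H i⁆` lies
in `N`, so `h s h⁻¹ = s ⁅s⁻¹, h⁆` shows that every `H i` normalizes `S`; then `⁅n, g⁆ ∈ S`
propagates from the `H i` to products because `⁅n, a b⁆ = ⁅n, a⁆ (a ⁅n, b⁆ a⁻¹)`.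
Writing `G = N ⊔ ⨆ x ∈ X, ⟨x⟩`, the term `⁅N, N⁆` vanishes because `N` is abelian.
-/

open scoped commutatorElement

namespace Subgroup

variable {G : Type*} [Group G] {N S K : Subgroup G}

theorem le_normalizer_of_commutator_le (hSN : S ≤ N) (hK : ⁅N, K⁆ ≤ S) :
    K ≤ normalizer (S : Set G) := by
  have conj_mem : ∀ h ∈ K, ∀ s ∈ S, h * s * h⁻¹ ∈ S := fun h hh s hs => by
    have hcomm : ⁅s⁻¹, h⁆ ∈ S := hK (commutator_mem_commutator (inv_mem (hSN hs)) hh)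
    simpa [commutatorElement_def, mul_assoc] using mul_mem hs hcomm
  intro h hh
  refine mem_normalizer_iff.2 fun s => ⟨conj_mem h hh s, fun hs => ?_⟩
  simpa [mul_assoc] using conj_mem h⁻¹ (inv_mem hh) _ hs

theorem commutator_iSup_le {ι : Sort*} {H : ι → Subgroup G} (hSN : S ≤ N)
    (hH : ∀ i, ⁅N, H i⁆ ≤ S) : ⁅N, ⨆ i, H i⁆ ≤ S := by
  have hnorm : ⨆ i, H i ≤ normalizer (S : Set G) :=
    iSup_le fun i => le_normalizer_of_commutator_le hSN (hH i)
  rw [commutator_le]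
  intro n hn g hg
  induction hg using iSup_induction' with
  | hp i g hg => exact hH i (commutator_mem_commutator hn hg)
  | h1 => simp
  | hmul a b ha _ iha ihb =>
    rw [commutatorElement_mul_right_eq_mul_conj, mul_assoc _ a, mul_assoc]
    exact mul_mem iha ((mem_normalizer_iff.1 (hnorm ha) _).1 ihb)

theorem commutator_iSup [N.Normal] {ι : Sort*} (H : ι → Subgroup G) :
    ⁅N, ⨆ i, H i⁆ = ⨆ i, ⁅N, H i⁆ :=
  le_antisymm (commutator_iSup_le (iSup_le fun _ => commutator_le_left _ _) (le_iSup _))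
    (iSup_le fun i => commutator_mono le_rfl (le_iSup H i))

theorem commutator_sup [N.Normal] (H K : Subgroup G) : ⁅N, H ⊔ K⁆ = ⁅N, H⁆ ⊔ ⁅N, K⁆ := by
  simp only [sup_eq_iSup, commutator_iSup]
  congr 1 with b
  cases b <;> rfl

end Subgroup

/-- Let `G` be a group with a subset `X` and a normal abelian subgroup `N`
such that `G = ⟨N, X⟩`. Then `[N,G] = ∏_{x ∈ X} [N,x]`. -/
theorem commutator_eq_iSup_of_generated
    (G : Type*) [Group G] (X : Set G) (N : Subgroup G)
    [N.Normal] (hab : ∀ a ∈ N, ∀ b ∈ N, a * b = b * a)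
    (hgen : Subgroup.closure ((N : Set G) ∪ X) = ⊤) :
    ⁅N, (⊤ : Subgroup G)⁆ = ⨆ x ∈ X, ⁅N, Subgroup.closure {x}⁆ := by
  have hNN : ⁅N, N⁆ = ⊥ := Subgroup.commutator_eq_bot_iff_le_centralizer.2 fun a ha =>
    Subgroup.mem_centralizer_iff.2 fun b hb => hab b hb a ha
  rw [← hgen, Subgroup.closure_union, Subgroup.closure_eq]
  conv_lhs => rw [← Set.biUnion_of_singleton X]
  simp only [Subgroup.closure_iUnion, Subgroup.commutator_sup, Subgroup.commutator_iSup, hNN,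
    bot_sup_eq]
end

section
/- Let G be a group such that the quotient G/Z(G) by its center has finite rank r, and let M be a normal abelian subgroup of G. Then the commutator subgroup [M,G] has rank at most r². -/
/-!
Let `H ≤ [M, G]` be finitely generated, so that `H` lies in the subgroup generated by finitely
many commutators `[mᵢ, gᵢ]` with `mᵢ ∈ M`. A commutator `[m, g]` only depends on `g` modulo
`Z(G)`, and `G/Z(G)` has rank `r`, so the `gᵢ` may be replaced by words in `r` elements `yₖ`;
expanding these words, `H` lies in the subgroup generated by finitely many `[m'ⱼ, yₖ]` with
`m'ⱼ ∈ M`. As `M` is abelian and normal, `m ↦ [m, y]` is a homomorphism on `M`, and `[m, y]`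
only depends on `m` modulo `Z(G)`; the rank of `G/Z(G)` thus replaces the `m'ⱼ` by `r` elements
`bᵢ ∈ M`. Hence `H` lies in the abelian subgroup generated by the `r²` commutators `[bᵢ, yₖ]`,
and a subgroup of an abelian group generated by `n` elements is generated by `n` elements
(submodules over a principal ideal domain).
-/

/-- A group has rank at most `r` if every finitely generated subgroup can be
generated by at most `r` elements. -/
def HasRankLE (G : Type*) [Group G] (r : ℕ) : Prop :=
  ∀ H : Subgroup G, H.FG → ∃ S : Finset G, S.card ≤ r ∧ Subgroup.closure (S : Set G) = H

open Subgroup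
open scoped commutatorElement

theorem Submodule.exists_finset_card_le_span_eq_of_le_span {R M : Type*} [CommRing R]
    [IsDomain R] [IsPrincipalIdealRing R] [AddCommGroup M] [Module R M] {s : Finset M}
    {N : Submodule R M} (hN : N ≤ span R s) :
    ∃ t : Finset M, t.card ≤ s.card ∧ span R (t : Set M) = N := by
  classical
  let π := Fintype.linearCombination R (fun x : s => (x : M))
  have hπ : LinearMap.range π = span R s := by
    rw [Fintype.range_linearCombination]; simp
  obtain ⟨n, b⟩ := basisOfPid (Pi.basisFun R s) (N.comap π)
  have hn : n ≤ s.card := by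
    simpa [Module.finrank_eq_card_basis b] using (N.comap π).finrank_le
  refine ⟨Finset.univ.image fun i => π (b i), Finset.card_image_le.trans (by simpa using hn), ?_⟩
  calc span R ↑(Finset.univ.image fun i => π (b i))
      = (span R (Set.range b)).map (π.comp (N.comap π).subtype) := by
        rw [map_span, ← Set.range_comp, Finset.coe_image, Finset.coe_univ, Set.image_univ]
        rfl
    _ = N := by
      rw [b.span_eq, map_comp, map_subtype_top, map_comap_eq, hπ, inf_eq_right.2 hN]

theorem Subgroup.exists_finset_card_le_closure_eq_of_le_closure {A : Type*} [CommGroup A]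
    {s : Finset A} {H : Subgroup A} (hH : H ≤ closure s) :
    ∃ t : Finset A, t.card ≤ s.card ∧ closure (t : Set A) = H := by
  let e : Subgroup A ≃o Submodule ℤ (Additive A) := toAddSubgroup.trans AddSubgroup.toIntSubmodule
  have he (u : Finset A) :
      e (closure u) = Submodule.span ℤ ↑(u.map Additive.toMul.symm.toEmbedding) := by
    apply Submodule.toAddSubgroup_injective
    rw [Submodule.span_int_eq_addSubgroupClosure, Finset.coe_map, Equiv.coe_toEmbedding,
      Equiv.image_symm_eq_preimage]
    exact toAddSubgroup_closure _
  obtain ⟨t, ht, htH⟩ := Submodule.exists_finset_card_le_span_eq_of_le_span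
    (s := s.map Additive.toMul.symm.toEmbedding) (N := e H) (by rw [← he]; exact e.monotone hH)
  refine ⟨t.map Additive.toMul.toEmbedding, by simpa using ht, e.injective ?_⟩
  rw [he, ← htH, Finset.map_map]
  simp

namespace Subgroup

variable {G : Type*} [Group G]

theorem exists_finset_subset_mem_closure {s : Set G} {x : G} (hx : x ∈ closure s) :
    ∃ F : Finset G, ↑F ⊆ s ∧ x ∈ closure (F : Set G) := by
  classical
  induction hx using closure_induction with
  | mem x hx => exact ⟨{x}, by simpa, subset_closure (by simp)⟩
  | one => exact ⟨∅, by simp, one_mem _⟩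
  | mul x y _ _ ihx ihy =>
    obtain ⟨F, hFs, hxF⟩ := ihx
    obtain ⟨F', hF's, hyF'⟩ := ihy
    refine ⟨F ∪ F', by simp [hFs, hF's], mul_mem ?_ ?_⟩
    · exact closure_mono (by simp) hxF
    · exact closure_mono (by simp) hyF'
  | inv x _ ih =>
    obtain ⟨F, hFs, hxF⟩ := ih
    exact ⟨F, hFs, inv_mem hxF⟩

theorem exists_finset_subset_le_closure {s : Set G} {H : Subgroup G} (hH : H.FG)
    (hle : H ≤ closure s) : ∃ F : Finset G, ↑F ⊆ s ∧ H ≤ closure (F : Set G) := by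
  classical
  obtain ⟨T, rfl⟩ := hH
  have hT : ∀ x ∈ T, ∃ F : Finset G, ↑F ⊆ s ∧ x ∈ closure (F : Set G) := fun x hx =>
    exists_finset_subset_mem_closure (hle (subset_closure hx))
  choose! F hFs hxF using hT
  refine ⟨T.biUnion F, by rw [Finset.coe_biUnion]; exact Set.iUnion₂_subset hFs, ?_⟩
  exact (closure_le _).2 fun x hx =>
    closure_mono (Finset.coe_subset.2 (Finset.subset_biUnion_of_mem F hx)) (hxF x hx)

theorem exists_finset_le_closure_image2 {α β : Type*} {f : α → β → G} {s : Set α} {t : Set β}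
    {H : Subgroup G} (hH : H.FG) (hle : H ≤ closure (Set.image2 f s t)) :
    ∃ (s' : Finset α) (t' : Finset β), ↑s' ⊆ s ∧ ↑t' ⊆ t ∧
      H ≤ closure (Set.image2 f s' t') := by
  classical
  obtain ⟨F, hFst, hHF⟩ := exists_finset_subset_le_closure hH hle
  obtain ⟨s', t', hs', ht', hF⟩ := Finset.subset_set_image₂ hFst
  refine ⟨s', t', hs', ht', hHF.trans (closure_mono ?_)⟩
  rw [← Finset.coe_image₂]
  exact_mod_cast hF

theorem commutatorElement_mem_left {M : Subgroup G} [M.Normal] {m : G} (hm : m ∈ M) (g : G) :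
    ⁅m, g⁆ ∈ M :=
  commutator_le_left M ⊤ (commutator_mem_commutator hm (mem_top g))

-- The scoped instance turns `IsMulCommutative K` into `CommGroup K`.
open scoped IsMulCommutative in
theorem hasRankLE_of_forall_le_closure_finset {K : Subgroup G} [IsMulCommutative K] {n : ℕ}
    (h : ∀ H ≤ K, H.FG →
      ∃ E : Finset G, E.card ≤ n ∧ (E : Set G) ⊆ K ∧ H ≤ closure (E : Set G)) :
    HasRankLE K n := by
  classical
  rintro H ⟨T, rfl⟩
  obtain ⟨E, hE, hEK, hTE⟩ := h ((closure (T : Set K)).map K.subtype) (map_subtype_le _)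
    ⟨T.image K.subtype, by rw [MonoidHom.map_closure, Finset.coe_image]⟩
  lift E to Finset K using hEK
  rw [Finset.coe_image, ← coe_subtype, ← MonoidHom.map_closure,
    map_le_map_iff_of_injective K.subtype_injective] at hTE
  obtain ⟨t, ht, htT⟩ := exists_finset_card_le_closure_eq_of_le_closure hTE
  rw [Finset.card_image_of_injective _ Subtype.val_injective] at hE
  exact ⟨t, ht.trans hE, htT⟩

end Subgroup

theorem HasRankLE.exists_finset_closure_le_closure_sup {G : Type*} [Group G] {N : Subgroup G}
    [N.Normal] {r : ℕ} (h : HasRankLE (G ⧸ N) r) (F : Finset G) :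
    ∃ Y : Finset G, Y.card ≤ r ∧ (Y : Set G) ⊆ closure (F : Set G) ∧
      closure (F : Set G) ≤ closure (Y : Set G) ⊔ N := by
  classical
  set mk := QuotientGroup.mk' N
  obtain ⟨S, hS, hSF⟩ := h ((closure (F : Set G)).map mk)
    ⟨F.image mk, by rw [MonoidHom.map_closure, Finset.coe_image]⟩
  have hlift : ∀ q ∈ S, ∃ y ∈ closure (F : Set G), mk y = q := fun q hq => by
    simpa [hSF] using (subset_closure hq : q ∈ closure (S : Set (G ⧸ N)))
  choose! lift hlift_mem hlift_eq using hlift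
  refine ⟨S.image lift, Finset.card_image_le.trans hS, ?_, ?_⟩
  · rw [Finset.coe_image]
    exact Set.image_subset_iff.2 hlift_mem
  have hmap : (closure (S.image lift : Set G)).map mk = (closure (F : Set G)).map mk := by
    rw [MonoidHom.map_closure, ← hSF, Finset.coe_image, Set.image_image,
      Set.image_congr hlift_eq, Set.image_id']
  calc closure (F : Set G) ≤ ((closure (F : Set G)).map mk).comap mk := le_comap_map mk _
    _ = closure (S.image lift : Set G) ⊔ N := by
      rw [← hmap, comap_map_eq, QuotientGroup.ker_mk']

section Commutator

variable {G : Type*} [Group G]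

theorem commutatorElement_mul_right_of_mem_center (a b : G) {z : G} (hz : z ∈ center G) :
    ⁅a, b * z⁆ = ⁅a, b⁆ := by
  rw [commutatorElement_mul_right_eq_mul_conj,
    commutatorElement_eq_one_iff_commute.2 (mem_center_iff.1 hz a), mul_one, mul_inv_cancel_right]

theorem commutatorElement_mul_left_of_mem_center (a b : G) {z : G} (hz : z ∈ center G) :
    ⁅a * z, b⁆ = ⁅a, b⁆ := by
  rw [commutatorElement_mul_left_eq_conj_mul,
    commutatorElement_eq_one_iff_commute.2 (mem_center_iff.1 hz b).symm, mul_one,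
    mul_inv_cancel, one_mul]

variable {M : Subgroup G} [M.Normal]

theorem commutatorElement_mem_closure_image2_of_mem_closure_right {Y : Set G} {g : G}
    (hg : g ∈ closure Y) : ∀ m ∈ M, ⁅m, g⁆ ∈ closure (Set.image2 (⁅·, ·⁆) (M : Set G) Y) := by
  induction hg using closure_induction with
  | mem y hy => exact fun m hm => subset_closure (Set.mem_image2_of_mem hm hy)
  | one => exact fun m _ => by rw [commutatorElement_one_right]; exact one_mem _
  | mul u v _ _ ihu ihv =>
    intro m hm
    have : ⁅m, u * v⁆ = ⁅m, u⁆ * ⁅m, v⁆ * ⁅⁅m, v⁆⁻¹, u⁆ := by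
      simp only [commutatorElement_def]; group
    rw [this]
    exact mul_mem (mul_mem (ihu m hm) (ihv m hm))
      (ihu _ (inv_mem (commutatorElement_mem_left hm v)))
  | inv u _ ihu =>
    intro m hm
    have : ⁅m, u⁻¹⁆ = ⁅u⁻¹ * m * u, u⁆⁻¹ := by
      simp only [commutatorElement_def]; group
    rw [this]
    exact inv_mem (ihu _ (Normal.conj_mem' ‹_› m hm u))

theorem commutatorElement_mem_closure_image2_of_mem_sup_center_right {Y : Set G} {m g : G}
    (hm : m ∈ M) (hg : g ∈ closure Y ⊔ center G) :
    ⁅m, g⁆ ∈ closure (Set.image2 (⁅·, ·⁆) (M : Set G) Y) := by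
  obtain ⟨w, hw, z, hz, rfl⟩ := mem_sup_of_normal_right.1 hg
  rw [commutatorElement_mul_right_of_mem_center _ _ hz]
  exact commutatorElement_mem_closure_image2_of_mem_closure_right hw m hm

variable [IsMulCommutative M]

theorem commutatorElement_mem_closure_image2_of_mem_closure_left {B : Set G} (hBM : B ⊆ M)
    {b : G} (hb : b ∈ closure B) (y : G) :
    ⁅b, y⁆ ∈ closure (Set.image2 (⁅·, ·⁆) B {y}) := by
  have hclosure : closure B ≤ M := (closure_le M).2 hBM
  induction hb using closure_induction with
  | mem b hb => exact subset_closure (Set.mem_image2_of_mem hb rfl)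
  | one => rw [commutatorElement_one_left]; exact one_mem _
  | mul a b ha hb iha ihb =>
    rw [commutatorElement_mul_left_eq_conj_mul, mul_inv_eq_iff_eq_mul.2
      (setLike_mul_comm (hclosure ha) (commutatorElement_mem_left (hclosure hb) y))]
    exact mul_mem ihb iha
  | inv a ha iha =>
    have hya : ⁅y, a⁆ ∈ M :=
      commutatorElement_inv a y ▸ inv_mem (commutatorElement_mem_left (hclosure ha) y)
    rw [commutatorElement_inv_left, setLike_mul_comm (inv_mem (hclosure ha)) hya,
      inv_mul_cancel_right, ← commutatorElement_inv]
    exact inv_mem iha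

theorem commutatorElement_mem_closure_image2_of_mem_sup_center_left {B Y : Set G} (hBM : B ⊆ M)
    {b y : G} (hb : b ∈ closure B ⊔ center G) (hy : y ∈ Y) :
    ⁅b, y⁆ ∈ closure (Set.image2 (⁅·, ·⁆) B Y) := by
  obtain ⟨w, hw, z, hz, rfl⟩ := mem_sup_of_normal_right.1 hb
  rw [commutatorElement_mul_left_of_mem_center _ _ hz]
  exact closure_mono (Set.image2_subset_left (Set.singleton_subset_iff.2 hy))
    (commutatorElement_mem_closure_image2_of_mem_closure_left hBM hw y)

end Commutator

theorem HasRankLE.exists_finset_le_closure_image2_commutatorElement {G : Type*} [Group G]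
    {r : ℕ} (hZ : HasRankLE (G ⧸ center G) r) {M : Subgroup G} [M.Normal] [IsMulCommutative M]
    {H : Subgroup G} (hH : H.FG) (hHM : H ≤ ⁅M, ⊤⁆) :
    ∃ B Y : Finset G, B.card ≤ r ∧ Y.card ≤ r ∧ (B : Set G) ⊆ M ∧
      H ≤ closure (Set.image2 (⁅·, ·⁆) (B : Set G) (Y : Set G)) := by
  obtain ⟨M₀, G₀, hM₀, -, hH₀⟩ := exists_finset_le_closure_image2 hH hHM
  obtain ⟨Y, hY, -, hG₀Y⟩ := hZ.exists_finset_closure_le_closure_sup G₀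
  have hHY : H ≤ closure (Set.image2 (⁅·, ·⁆) (M : Set G) (Y : Set G)) :=
    hH₀.trans <| (closure_le _).2 <| Set.image2_subset_iff.2 fun m hm g hg =>
      commutatorElement_mem_closure_image2_of_mem_sup_center_right (hM₀ hm)
        (hG₀Y (subset_closure hg))
  obtain ⟨M₁, Y₁, hM₁, hY₁, hH₁⟩ := exists_finset_le_closure_image2 hH hHY
  obtain ⟨B, hB, hBM₁, hM₁B⟩ := hZ.exists_finset_closure_le_closure_sup M₁
  have hBM : (B : Set G) ⊆ M := hBM₁.trans ((closure_le M).2 hM₁)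
  refine ⟨B, Y, hB, hY, hBM, hH₁.trans <| (closure_le _).2 <| Set.image2_subset_iff.2 ?_⟩
  exact fun m hm y hy => commutatorElement_mem_closure_image2_of_mem_sup_center_left hBM
    (hM₁B (subset_closure hm)) (hY₁ hy)

/-- If `G/Z(G)` has finite rank `r` and `M` is a normal abelian subgroup
of `G`, then `[M,G]` has rank at most `r²`. -/
theorem rank_commutator_le_sq
    (G : Type*) [Group G] (r : ℕ)
    (hZ : HasRankLE (G ⧸ Subgroup.center G) r)
    (M : Subgroup G) [M.Normal] [IsMulCommutative M] :
    HasRankLE (⁅M, (⊤ : Subgroup G)⁆ : Subgroup G) (r ^ 2) := by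
  classical
  have hKM : ⁅M, (⊤ : Subgroup G)⁆ ≤ M := commutator_le_left M ⊤
  have : IsMulCommutative (⁅M, (⊤ : Subgroup G)⁆ : Subgroup G) :=
    .of_setLike_mul_comm fun a ha b hb => setLike_mul_comm (hKM ha) (hKM hb)
  refine hasRankLE_of_forall_le_closure_finset fun H hHK hH => ?_
  obtain ⟨B, Y, hB, hY, hBM, hHBY⟩ := hZ.exists_finset_le_closure_image2_commutatorElement hH hHK
  refine ⟨Finset.image₂ (⁅·, ·⁆) B Y, ?_, ?_, by rwa [Finset.coe_image₂]⟩
  · calc (Finset.image₂ (⁅·, ·⁆) B Y).card ≤ B.card * Y.card := Finset.card_image₂_le _ _ _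
      _ ≤ r ^ 2 := sq r ▸ Nat.mul_le_mul hB hY
  · rw [Finset.coe_image₂]
    exact Set.image2_subset_iff.2 fun b hb y _ => commutator_mem_commutator (hBM hb) (mem_top y)
end

section
/- For all positive integers n and r there exists an integer s = s(n,r) such that every finite p-group of exponent dividing p^n and rank at most r has order at most p^s. -/
open Subgroup

section

variable {G : Type*} [Group G]

theorem HasRankLE.rank_le {r : ℕ} (hG : HasRankLE G r) (H : Subgroup G) [Group.FG H] :
    Group.rank H ≤ r := by
  obtain ⟨S, hSr, hSH⟩ := hG H ((Group.fg_iff_subgroup_fg H).mp inferInstance)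
  exact (rank_congr hSH.symm).trans_le ((rank_closure_finset_le_card S).trans hSr)

theorem Group.card_mulAut_le_card_pow_rank [Finite G] :
    Nat.card (MulAut G) ≤ Nat.card G ^ Group.rank G := by
  obtain ⟨S, hS, hSG⟩ := Group.rank_spec G
  have hinj : Function.Injective fun (φ : MulAut G) (s : S) => φ s := fun φ ψ h =>
    MulEquiv.toMonoidHom_injective <|
      MonoidHom.eq_of_eqOn_dense hSG fun s hs => congrFun h ⟨s, hs⟩
  calc Nat.card (MulAut G) ≤ Nat.card (S → G) := Nat.card_le_card_of_injective _ hinj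
    _ = Nat.card G ^ Group.rank G := by rw [Nat.card_fun, Nat.card_eq_finsetCard, hS]

theorem Subgroup.index_centralizer_le_card_mulAut (A : Subgroup G) [A.Normal] [Finite A] :
    (centralizer (A : Set G)).index ≤ Nat.card (MulAut A) := by
  have hker : (MulAut.conjNormal : G →* MulAut A).ker = centralizer A := by
    ext g
    simp only [MonoidHom.mem_ker, mem_centralizer_iff, MulEquiv.ext_iff, Subtype.ext_iff,
      MulAut.conjNormal_apply, MulAut.one_apply, Subtype.forall, SetLike.mem_coe]
    exact forall₂_congr fun _ _ => mul_inv_eq_iff_eq_mul.trans eq_comm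
  rw [← hker, index_ker]
  exact card_le_card_group _

theorem Subgroup.normal_of_le_center {H : Subgroup G} (hH : H ≤ center G) : H.Normal :=
  ⟨fun n hn g => by rwa [mem_center_iff.mp (hH hn) g, mul_inv_cancel_right]⟩

theorem Subgroup.isMulCommutative_zpowers_sup {A : Subgroup G} [IsMulCommutative A] {x : G}
    (hx : x ∈ centralizer (A : Set G)) : IsMulCommutative ↥(zpowers x ⊔ A) := by
  have hxA : zpowers x ≤ centralizer (A : Set G) := zpowers_le.mpr hx
  rw [sup_eq_closure]
  refine isMulCommutative_closure ?_
  rintro a (ha | ha) b (hb | hb)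
  · exact setLike_mul_comm ha hb
  · exact (hxA ha b hb).symm
  · exact hxA hb a ha
  · exact setLike_mul_comm ha hb

theorem IsPGroup.exists_ne_one_mem_center_of_normal {p : ℕ} [Fact p.Prime] [Finite G]
    (hG : IsPGroup p G) {N : Subgroup G} [N.Normal] (hN : N ≠ ⊥) :
    ∃ z ∈ N, z ∈ center G ∧ z ≠ 1 := by
  have : Nontrivial N := (nontrivial_iff_ne_bot N).mpr hN
  have hpN : p ∣ Nat.card N := by
    obtain ⟨k, hk, hNk⟩ := (hG.to_subgroup N).nontrivial_iff_card.mp this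
    exact hNk ▸ dvd_pow_self p hk.ne'
  -- the fixed points of `G` acting on `N` by conjugation are `N ⊓ center G`
  obtain ⟨z, hz, hz1⟩ :=
    (hG.of_equiv ConjAct.toConjAct).exists_fixed_point_of_prime_dvd_card_of_fixed_point
      N hpN (a := (1 : N)) fun _ => smul_one _
  refine ⟨z, z.2, mem_center_iff.mpr fun g => ?_, fun h => hz1 (Subtype.ext h.symm)⟩
  have := congrArg Subtype.val (hz (ConjAct.toConjAct g))
  rw [ConjAct.Subgroup.val_conj_smul, ConjAct.smul_def] at this
  simpa [mul_inv_eq_iff_eq_mul] using this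

theorem IsPGroup.exists_normal_isMulCommutative_centralizer_eq {p : ℕ} [Fact p.Prime]
    [Finite G] (hG : IsPGroup p G) :
    ∃ A : Subgroup G, A.Normal ∧ IsMulCommutative A ∧ centralizer (A : Set G) = A := by
  obtain ⟨A, ⟨hAn, hAc⟩, hAmax⟩ :=
    (Set.toFinite {A : Subgroup G | A.Normal ∧ IsMulCommutative A}).exists_maximal
      ⟨⊥, inferInstance, inferInstance⟩
  refine ⟨A, hAn, hAc, le_antisymm ?_ (le_centralizer A)⟩
  by_contra hCA
  let π := QuotientGroup.mk' A
  have : ((centralizer (A : Set G)).map π).Normal :=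
    Normal.map inferInstance π (QuotientGroup.mk'_surjective A)
  have hCA' : (centralizer (A : Set G)).map π ≠ ⊥ := by
    rwa [Ne, Subgroup.map_eq_bot_iff, QuotientGroup.ker_mk']
  obtain ⟨_, ⟨x, hxC, rfl⟩, hx, hx1⟩ :=
    (hG.to_quotient A).exists_ne_one_mem_center_of_normal hCA'
  have hB : (zpowers x ⊔ A).Normal := by
    rw [← QuotientGroup.ker_mk' A, ← comap_map_eq, MonoidHom.map_zpowers]
    exact (normal_of_le_center (zpowers_le.mpr hx)).comap _
  have hBA : zpowers x ⊔ A ≤ A := hAmax ⟨hB, isMulCommutative_zpowers_sup hxC⟩ le_sup_right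
  exact hx1 ((QuotientGroup.eq_one_iff x).mpr (hBA (mem_sup_left (mem_zpowers x))))

end

open scoped IsMulCommutative in
theorem card_le_of_exponent_and_rank_general
    (n r : ℕ) :
    ∃ s : ℕ, ∀ (p : ℕ), p.Prime →
      ∀ (G : Type) [Group G] [Fintype G], IsPGroup p G →
        (∀ g : G, g ^ (p ^ n) = 1) → HasRankLE G r →
        Fintype.card G ≤ p ^ s := by
  refine ⟨n * r + n * r * r, fun p hp G _ _ hG hexp hrank => ?_⟩
  have : Fact p.Prime := ⟨hp⟩
  obtain ⟨A, hAn, hAc, hAC⟩ := hG.exists_normal_isMulCommutative_centralizer_eq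
  have hA : Nat.card A ≤ p ^ (n * r) :=
    calc Nat.card A ≤ (p ^ n) ^ Group.rank A :=
          Nat.le_of_dvd (pow_pos (pow_pos hp.pos n) _)
            (card_dvd_exponent_pow_rank' A fun a => Subtype.ext (hexp a))
      _ ≤ (p ^ n) ^ r := Nat.pow_le_pow_right (pow_pos hp.pos n) (hrank.rank_le A)
      _ = p ^ (n * r) := (pow_mul p n r).symm
  have hAut : Nat.card (MulAut A) ≤ p ^ (n * r * r) :=
    calc Nat.card (MulAut A) ≤ Nat.card A ^ Group.rank A := Group.card_mulAut_le_card_pow_rank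
      _ ≤ (p ^ (n * r)) ^ Group.rank A := Nat.pow_le_pow_left hA _
      _ ≤ (p ^ (n * r)) ^ r := Nat.pow_le_pow_right (pow_pos hp.pos _) (hrank.rank_le A)
      _ = p ^ (n * r * r) := (pow_mul p _ r).symm
  calc Fintype.card G = Nat.card A * A.index := by rw [card_mul_index, Nat.card_eq_fintype_card]
    _ ≤ Nat.card A * Nat.card (MulAut A) := Nat.mul_le_mul_left _
          ((congrArg index hAC).symm.trans_le (index_centralizer_le_card_mulAut A))
    _ ≤ p ^ (n * r) * p ^ (n * r * r) := Nat.mul_le_mul hA hAut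
    _ = p ^ (n * r + n * r * r) := (pow_add p _ _).symm

/-- For all positive integers `n, r` there is `s = s(n,r)` such that any
finite `p`-group of exponent dividing `p^n` and rank at most `r` has order at most `p^s`. -/
theorem card_le_of_exponent_and_rank
    (n r : ℕ) (hn : 0 < n) (hr : 0 < r) :
    ∃ s : ℕ, ∀ (p : ℕ), p.Prime →
      ∀ (G : Type) [Group G] [Fintype G], IsPGroup p G →
        (∀ g : G, g ^ (p ^ n) = 1) → HasRankLE G r →
        Fintype.card G ≤ p ^ s :=
  card_le_of_exponent_and_rank_general n r
end

section
/- Let G be a finite soluble group with an unrefinable (chief) normal series G = N_1 > N_2 > … > N_k > N_{k+1} = 1, and suppose every soluble group of automorphisms of each factor N_i/N_{i+1} has derived length at most d. Then the d-th derived subgroup of G is nilpotent, i.e., G^{(d)} ≤ F(G). -/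
/-!
The conjugation action of `G` on a chief factor `N i / N (i+1)` has a soluble image in its
automorphism group, so by hypothesis `G^{(d)}` lies in the kernel of that action, i.e.
`⁅G^{(d)}, N i⁆ ≤ N (i+1)`. A subgroup centralizing every factor of a series descending from it
to `⊥` has its lower central series squeezed into that series, hence is nilpotent.
-/

namespace Subgroup

variable {G : Type*} [Group G]

theorem map_conjNormal_subgroupOf (A B : Subgroup G) [A.Normal] [B.Normal] (g : G) :
    (B.subgroupOf A).map ((MulAut.conjNormal g : MulAut A) : A →* A) = B.subgroupOf A := by
  ext x
  simp only [map_equiv_eq_comap_symm, mem_comap, mem_subgroupOf, MonoidHom.coe_coe,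
    MulAut.conjNormal_symm_apply]
  exact ⟨fun h => by simpa [mul_assoc] using ‹B.Normal›.conj_mem _ h g,
    fun h => by simpa using ‹B.Normal›.conj_mem _ h g⁻¹⟩

theorem lowerCentralSeries_le_of_commutator_le (S : Subgroup G) (N : ℕ → Subgroup G) (k : ℕ)
    (h0 : S ≤ N 0) (hcomm : ∀ i < k, ⁅S, N i⁆ ≤ N (i + 1)) :
    ∀ n ≤ k, S.lowerCentralSeries n ≤ N n
  | 0, _ => h0
  | n + 1, hn => calc
      S.lowerCentralSeries (n + 1) = ⁅S.lowerCentralSeries n, S⁆ := rfl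
      _ ≤ ⁅N n, S⁆ :=
        commutator_mono (lowerCentralSeries_le_of_commutator_le S N k h0 hcomm n (by omega)) le_rfl
      _ ≤ N (n + 1) := commutator_comm S (N n) ▸ hcomm n (by omega)

theorem isNilpotent_of_commutator_le (S : Subgroup G) (N : ℕ → Subgroup G) (k : ℕ)
    (h0 : S ≤ N 0) (hk : N k = ⊥) (hcomm : ∀ i < k, ⁅S, N i⁆ ≤ N (i + 1)) :
    Group.IsNilpotent S :=
  isNilpotent_of_lowerCentralSeries_eq_bot <| eq_bot_iff.mpr <|
    hk ▸ lowerCentralSeries_le_of_commutator_le S N k h0 hcomm k le_rfl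

end Subgroup

namespace MulAut

open Subgroup

variable {G : Type*} [Group G]

def conjNormalQuotient (A B : Subgroup G) [A.Normal] [B.Normal] :
    G →* MulAut (A ⧸ B.subgroupOf A) where
  toFun g := QuotientGroup.congr _ _ (conjNormal g) (map_conjNormal_subgroupOf A B g)
  map_one' := by
    ext x
    induction x using QuotientGroup.induction_on
    simp [QuotientGroup.congr_mk]
  map_mul' a b := by
    ext x
    induction x using QuotientGroup.induction_on
    simp only [mul_apply, QuotientGroup.congr_mk, map_mul]

theorem conjNormalQuotient_mk (A B : Subgroup G) [A.Normal] [B.Normal] (g : G) (n : A) :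
    conjNormalQuotient A B g (n : A ⧸ B.subgroupOf A) = (conjNormal g n : A ⧸ B.subgroupOf A) :=
  QuotientGroup.congr_mk _ _ (conjNormal g) (map_conjNormal_subgroupOf A B g) n

theorem commutator_ker_conjNormalQuotient_le (A B : Subgroup G) [A.Normal] [B.Normal] :
    ⁅(conjNormalQuotient A B).ker, A⁆ ≤ B := by
  rw [commutator_le]
  intro g hg n hn
  -- `g` fixes the class of `n⁻¹`, i.e. `(g n⁻¹ g⁻¹)⁻¹ n⁻¹ = ⁅g, n⁆ ∈ B`
  have hfix := congrArg (· ((⟨n⁻¹, A.inv_mem hn⟩ : A) : A ⧸ B.subgroupOf A))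
    (MonoidHom.mem_ker.mp hg)
  simp only [conjNormalQuotient_mk, one_apply, QuotientGroup.eq, mem_subgroupOf] at hfix
  simpa [commutatorElement_def, mul_assoc] using hfix

end MulAut

theorem derivedSeries_le_ker_of_derivedSeries_range_eq_bot {G H : Type*} [Group G] [Group H]
    (f : G →* H) {d : ℕ} (h : derivedSeries f.range d = ⊥) : derivedSeries G d ≤ f.ker := by
  rw [← f.ker_rangeRestrict, ← Subgroup.map_eq_bot_iff,
    map_derivedSeries_eq f.rangeRestrict_surjective, h]

theorem derived_le_fitting_of_chief_series_general
    (G : Type) [Group G] [Group.IsSolvable G] (k d : ℕ)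
    (N : ℕ → Subgroup G)
    (hN0 : N 0 = ⊤) (hNk : N k = ⊥)
    (hnormal : ∀ i, (N i).Normal)
    [inst : ∀ i, ((N (i + 1)).subgroupOf (N i)).Normal]
    (haut : ∀ i < k,
      ∀ A : Subgroup (MulAut (↥(N i) ⧸ (N (i + 1)).subgroupOf (N i))),
        IsSolvable A → derivedSeries A d = ⊥) :
    Group.IsNilpotent (derivedSeries G d) := by
  refine Subgroup.isNilpotent_of_commutator_le _ N k (hN0 ▸ le_top) hNk fun i hi => ?_
  have := hnormal i
  have := hnormal (i + 1)
  let φ := MulAut.conjNormalQuotient (N i) (N (i + 1))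
  have hker : derivedSeries G d ≤ φ.ker := derivedSeries_le_ker_of_derivedSeries_range_eq_bot φ
    (haut i hi _ (Group.isSolvable_of_surjective φ.rangeRestrict_surjective))
  exact (Subgroup.commutator_mono hker le_rfl).trans
    (MulAut.commutator_ker_conjNormalQuotient_le _ _)

/-- Let `G` be a finite soluble group with an unrefinable (chief) normal
series `G = N 0 ≥ N 1 ≥ … ≥ N k = ⊥`, and suppose every soluble group of automorphisms
of each factor `N i / N (i+1)` has derived length at most `d`. Then the `d`-th derived
subgroup of `G` is nilpotent (i.e. `G^{(d)} ≤ F(G)`). -/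
theorem derived_le_fitting_of_chief_series
    (G : Type) [Group G] [Fintype G] [Group.IsSolvable G] (k d : ℕ)
    (N : ℕ → Subgroup G)
    (hN0 : N 0 = ⊤) (hNk : N k = ⊥)
    (hmono : ∀ i, N (i + 1) ≤ N i)
    (hnormal : ∀ i, (N i).Normal)
    [inst : ∀ i, ((N (i + 1)).subgroupOf (N i)).Normal]
    (hunref : ∀ i < k, ∀ H : Subgroup G, H.Normal →
      N (i + 1) ≤ H → H ≤ N i → H = N (i + 1) ∨ H = N i)
    (haut : ∀ i < k,
      ∀ A : Subgroup (MulAut (↥(N i) ⧸ (N (i + 1)).subgroupOf (N i))),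
        IsSolvable A → derivedSeries A d = ⊥) :
    Group.IsNilpotent (derivedSeries G d) :=
  derived_le_fitting_of_chief_series_general G k d N hN0 hNk hnormal (inst := inst) haut
end

section
/- Let G be a group such that G/Z(G) is locally finite. Then the derived subgroup G' is locally finite. -/
/-!
A finitely generated subgroup of `G'` is generated by finitely many products of commutators, so
it lies in `K'` for a finitely generated `K ≤ G`. The image of `K` in `G/Z(G)` is finitely
generated, hence finite; since `K ∩ Z(G) ≤ Z(K)`, the centre of `K` has finite index, and by
Schur's theorem `K'` is finite.
-/

/-- A group is locally finite if every finitely generated subgroup is finite. -/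
def IsLocallyFiniteGroup (G : Type*) [Group G] : Prop :=
  ∀ H : Subgroup G, H.FG → Finite H

section

open Subgroup
open scoped commutatorElement

variable {G : Type*} [Group G]

theorem commutatorElement_mul_mem_center {x y z w : G} (hz : z ∈ center G)
    (hw : w ∈ center G) : ⁅x * z, y * w⁆ = ⁅x, y⁆ := by
  have hz₁ (g : G) : ⁅z, g⁆ = 1 :=
    commutatorElement_eq_one_iff_mul_comm.mpr (mem_center_iff.mp hz g).symm
  have hw₁ (g : G) : ⁅g, w⁆ = 1 :=
    commutatorElement_eq_one_iff_mul_comm.mpr (mem_center_iff.mp hw g)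
  simp only [commutatorElement_mul_left_eq_conj_mul, commutatorElement_mul_right_eq_mul_conj,
    hz₁, hw₁]
  group

instance finite_commutatorSet_of_finiteIndex_center [(center G).FiniteIndex] :
    Finite (commutatorSet G) := by
  refine Finite.of_surjective
    (fun p : (G ⧸ center G) × (G ⧸ center G) =>
      (⟨⁅p.1.out, p.2.out⁆, commutator_mem_commutatorSet _ _⟩ : commutatorSet G)) ?_
  rintro ⟨_, x, y, rfl⟩
  obtain ⟨z, hz⟩ := QuotientGroup.mk_out_eq_mul (center G) x
  obtain ⟨w, hw⟩ := QuotientGroup.mk_out_eq_mul (center G) y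
  exact ⟨(x, y), Subtype.ext <| by simp only [hz, hw, commutatorElement_mul_mem_center z.2 w.2]⟩

theorem finiteIndex_center_of_finite_map {K : Subgroup G}
    [Finite (K.map (QuotientGroup.mk' (center G)))] : (center K).FiniteIndex := by
  have : ((center G).subgroupOf K).FiniteIndex := by
    constructor
    rw [← relIndex, ← QuotientGroup.ker_mk' (center G), relIndex_ker]
    exact Nat.card_pos.ne'
  refine finiteIndex_of_le (H := (center G).subgroupOf K) fun k hk =>
    mem_center_iff.mpr fun g => Subtype.ext ?_
  exact mem_center_iff.mp (mem_subgroupOf.mp hk) g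

theorem Subgroup.FG.map {G' : Type*} [Group G'] {H : Subgroup G} (hH : H.FG) (f : G →* G') :
    (H.map f).FG := by
  classical
  obtain ⟨S, rfl⟩ := hH
  exact ⟨S.image f, by rw [Finset.coe_image, MonoidHom.map_closure]⟩

theorem finite_commutator_of_fg (h : IsLocallyFiniteGroup (G ⧸ center G)) {K : Subgroup G}
    (hK : K.FG) : Finite (⁅K, K⁆ : Subgroup G) := by
  have : Finite (K.map (QuotientGroup.mk' (center G))) := h _ (hK.map _)
  have : (center K).FiniteIndex := finiteIndex_center_of_finite_map
  rw [← map_subtype_commutator]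
  exact Finite.of_surjective _ (K.subtype.subgroupMap_surjective _)

theorem exists_fg_of_mem_commutator {x : G} (hx : x ∈ commutator G) :
    ∃ K : Subgroup G, K.FG ∧ x ∈ ⁅K, K⁆ := by
  rw [commutator_eq_closure] at hx
  induction hx using closure_induction with
  | mem _ hx =>
    obtain ⟨a, b, rfl⟩ := hx
    classical
    exact ⟨closure ({a, b} : Finset G), ⟨_, rfl⟩, commutator_mem_commutator
      (subset_closure (by simp)) (subset_closure (by simp))⟩
  | one => exact ⟨⊥, FG.bot, one_mem _⟩
  | mul _ _ _ _ hx hy =>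
    obtain ⟨K₁, hK₁, hx⟩ := hx
    obtain ⟨K₂, hK₂, hy⟩ := hy
    exact ⟨K₁ ⊔ K₂, hK₁.sup hK₂, mul_mem (commutator_mono le_sup_left le_sup_left hx)
      (commutator_mono le_sup_right le_sup_right hy)⟩
  | inv _ _ hx =>
    obtain ⟨K, hK, hx⟩ := hx
    exact ⟨K, hK, inv_mem hx⟩

theorem exists_fg_le_commutator {H : Subgroup G} (hH : H.FG) (hle : H ≤ commutator G) :
    ∃ K : Subgroup G, K.FG ∧ H ≤ ⁅K, K⁆ := by
  obtain ⟨S, rfl⟩ := hH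
  choose K hK hsK using fun s : S => exists_fg_of_mem_commutator (hle (subset_closure s.2))
  refine ⟨⨆ s, K s, FG.iSup K hK, (closure_le _).mpr fun s hs => ?_⟩
  exact commutator_mono (le_iSup K ⟨s, hs⟩) (le_iSup K ⟨s, hs⟩) (hsK ⟨s, hs⟩)

theorem IsLocallyFiniteGroup.of_subgroup {L : Subgroup G}
    (h : ∀ H : Subgroup G, H.FG → H ≤ L → Finite H) : IsLocallyFiniteGroup L := fun H hH =>
  have := h _ (hH.map L.subtype) (map_subtype_le H)
  Finite.of_equiv _ (equivMapOfInjective H L.subtype L.subtype_injective).symm.toEquiv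

end

/-- If `G/Z(G)` is locally finite, then `G'` is locally finite. -/
theorem derived_locallyFinite_of_central_quotient
    (G : Type*) [Group G]
    (h : IsLocallyFiniteGroup (G ⧸ Subgroup.center G)) :
    IsLocallyFiniteGroup (commutator G) := by
  refine IsLocallyFiniteGroup.of_subgroup fun H hH hle => ?_
  obtain ⟨K, hK, hHK⟩ := exists_fg_le_commutator hH hle
  have := finite_commutator_of_fg h hK
  exact Finite.of_injective _ (Subgroup.inclusion_injective hHK)
end
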